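/- For positive integers α, β with α + β arbitrary, the finite sum identity ∑_{j=1}^{α} (1/j) ∑_{k=j}^{α} (-1)^{k-j} C(α,k) C(-1-α-β, k) C(β, k-j) = ∑_{j=1}^{α} ((-1)^β/j) · C(-α-1, j+β) · C(α+β, j+β) holds in the rationals. -/

import Mathlib

/-- Generalized binomial coefficient `C(x,k) = x(x-1)⋯(x-k+1)/k!` for rational `x`. -/
def gbinom (x : ℚ) (k : ℕ) : ℚ := (∏ i ∈ Finset.range k, (x - i)) / (Nat.factorial k)

/-!
The identity holds termwise in `j`. Since `C(-1-α-β, k) = (-1)^k C(α+β+k, k)`, the signs in the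
inner sum collapse to `(-1)^j` and it becomes the Saalschütz-type identity
`∑_{k=j}^{α} C(α,k) C(α+β+k,k) C(β,k-j) = C(α+β+j, j+β) C(α+β, j+β)` in `ℕ`.
To prove it, expand `C(α+β+k, k) = ∑_t C(α+β,t) C(k,t)` by Vandermonde and swap the sums.
For fixed `t`, trinomial revision `C(α,k) C(k,t) = C(α,t) C(α-t,k-t)` and Vandermonde give
`∑_k C(β,k-j) C(α,k) C(k,t) = C(α,t) C(α+β-t, j+β-t)`; a second trinomial revision turns
`C(α+β,t) C(α+β-t, j+β-t)` into `C(α+β, j+β) C(j+β, t)`, and a last Vandermonde sums over `t`.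
-/

open Finset

lemma gbinom_eq_choose (x : ℚ) (k : ℕ) : gbinom x k = Ring.choose x k := by
  rw [gbinom, Ring.choose_eq_smul, ← Polynomial.aeval_eq_smeval, Polynomial.aeval_def,
    Polynomial.eval₂_eq_eval_map, descPochhammer_map, descPochhammer_eval_eq_prod_range,
    smul_eq_mul, div_eq_inv_mul]

lemma gbinom_natCast (n k : ℕ) : gbinom n k = n.choose k := by
  rw [gbinom_eq_choose, Ring.choose_natCast]

lemma gbinom_neg_natCast_sub_one (n k : ℕ) :
    gbinom (-n - 1) k = (-1) ^ k * (n + k).choose k := by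
  have h : (n + 1 + k - 1 : ℚ) = (n + k : ℕ) := by push_cast; ring
  rw [gbinom_eq_choose, ← neg_add', Ring.choose_neg, h, Ring.choose_natCast, Units.smul_def,
    Int.coe_negOnePow_natCast, zsmul_eq_mul]
  push_cast; ring

lemma add_choose_right_eq_sum_range (m n N : ℕ) (h : n ≤ N) :
    (m + n).choose n = ∑ t ∈ range (N + 1), m.choose t * n.choose t := by
  rw [Nat.add_choose_eq, Nat.sum_antidiagonal_eq_sum_range_succ_mk]
  calc ∑ t ∈ range (n + 1), m.choose t * n.choose (n - t)
      = ∑ t ∈ range (n + 1), m.choose t * n.choose t :=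
        sum_congr rfl fun t ht => by rw [Nat.choose_symm (mem_range_succ_iff.mp ht)]
    _ = ∑ t ∈ range (N + 1), m.choose t * n.choose t :=
        sum_subset (range_subset_range.mpr (by omega)) fun t _ ht => by
          rw [Nat.choose_eq_zero_of_lt (n := n) (by simpa using ht), mul_zero]

lemma sum_Icc_choose_sub_mul_choose_mul_choose (a b j t : ℕ) (ht : t ≤ j + b) :
    ∑ k ∈ Icc j a, b.choose (k - j) * (a.choose k * k.choose t)
      = a.choose t * (b + (a - t)).choose (j + b - t) := by
  rw [Nat.add_choose_eq, mul_sum]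
  refine sum_bij_ne_zero (fun k _ _ => (j + b - k, k - t)) ?_ ?_ ?_ ?_ <;>
    simp only [ne_eq, mul_eq_zero, Nat.choose_eq_zero_iff, not_or, not_lt, mem_Icc,
      HasAntidiagonal.mem_antidiagonal, Prod.forall, Prod.mk.injEq, exists_prop, and_imp]
  · intros; omega
  · intros; omega
  · intro u v _ _ _ _
    exact ⟨t + v, by omega⟩
  · intro k _ _ _ _ htk
    rw [Nat.choose_mul htk, Nat.choose_symm_of_eq_add (show b = (k - j) + (j + b - k) by omega)]
    ring

lemma sum_Icc_choose_sub_mul_choose_mul_choose_of_lt (a b j t : ℕ) (ht : j + b < t) :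
    ∑ k ∈ Icc j a, b.choose (k - j) * (a.choose k * k.choose t) = 0 :=
  sum_eq_zero fun k _ => by
    rcases lt_or_ge k t with hkt | hkt
    · rw [Nat.choose_eq_zero_of_lt hkt, mul_zero, mul_zero]
    · rw [Nat.choose_eq_zero_of_lt (show b < k - j by omega), zero_mul]

lemma add_choose_mul_sum_Icc_choose_sub_mul_choose_mul_choose (a b j t : ℕ) :
    (a + b).choose t * ∑ k ∈ Icc j a, b.choose (k - j) * (a.choose k * k.choose t)
      = (a + b).choose (j + b) * ((j + b).choose t * a.choose t) := by
  rcases le_or_gt t (j + b) with ht | ht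
  · rw [sum_Icc_choose_sub_mul_choose_mul_choose a b j t ht]
    rcases le_or_gt t a with hta | hta
    · rw [show b + (a - t) = a + b - t by omega, mul_left_comm, ← Nat.choose_mul ht]
      ring
    · simp [Nat.choose_eq_zero_of_lt hta]
  · simp [sum_Icc_choose_sub_mul_choose_mul_choose_of_lt a b j t ht, Nat.choose_eq_zero_of_lt ht]

theorem sum_Icc_choose_mul_add_choose_mul_choose_sub (a b j : ℕ) :
    ∑ k ∈ Icc j a, a.choose k * (a + b + k).choose k * b.choose (k - j)
      = (a + b + j).choose (j + b) * (a + b).choose (j + b) := by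
  calc ∑ k ∈ Icc j a, a.choose k * (a + b + k).choose k * b.choose (k - j)
      = ∑ k ∈ Icc j a, ∑ t ∈ range (a + 1),
          (a + b).choose t * (b.choose (k - j) * (a.choose k * k.choose t)) := by
        refine sum_congr rfl fun k hk => ?_
        rw [add_choose_right_eq_sum_range (a + b) k a (mem_Icc.mp hk).2, mul_sum, sum_mul]
        exact sum_congr rfl fun t _ => by ring
    _ = ∑ t ∈ range (a + 1), (a + b).choose (j + b) * ((j + b).choose t * a.choose t) := by
        rw [sum_comm]
        refine sum_congr rfl fun t _ => ?_
        rw [← mul_sum, add_choose_mul_sum_Icc_choose_sub_mul_choose_mul_choose]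
    _ = (a + b + j).choose (j + b) * (a + b).choose (j + b) := by
        rw [← mul_sum, ← add_choose_right_eq_sum_range _ _ _ le_rfl,
          Nat.choose_symm_of_eq_add (show j + b + a = a + (j + b) by omega),
          show j + b + a = a + b + j by omega, mul_comm]

lemma neg_one_pow_mul_self {R : Type*} [Monoid R] [HasDistribNeg R] (n : ℕ) :
    (-1 : R) ^ n * (-1) ^ n = 1 := by
  rw [← pow_add, ← two_mul, pow_mul, neg_one_sq, one_pow]

lemma sum_Icc_neg_one_pow_mul_gbinom (α β j : ℕ) :
    ∑ k ∈ Icc j α, (-1 : ℚ) ^ (k - j) * gbinom α k * gbinom (-1 - α - β) k * gbinom β (k - j)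
      = (-1) ^ β * gbinom (-α - 1) (j + β) * gbinom (α + β) (j + β) := by
  have hneg : (-1 - α - β : ℚ) = -((α + β : ℕ) : ℚ) - 1 := by push_cast; ring
  have hterm : ∀ k ∈ Icc j α,
      (-1 : ℚ) ^ (k - j) * gbinom α k * gbinom (-1 - α - β) k * gbinom β (k - j)
        = (-1) ^ j * (α.choose k * (α + β + k).choose k * β.choose (k - j) : ℕ) := by
    intro k hk
    obtain ⟨d, rfl⟩ := Nat.exists_eq_add_of_le (mem_Icc.mp hk).1
    rw [hneg, gbinom_neg_natCast_sub_one, gbinom_natCast, gbinom_natCast, Nat.add_sub_cancel_left,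
      pow_add]
    push_cast
    linear_combination (-1 : ℚ) ^ j * α.choose (j + d) * (α + β + (j + d) : ℕ).choose (j + d)
      * β.choose d * neg_one_pow_mul_self (R := ℚ) d
  rw [sum_congr rfl hterm, ← mul_sum, ← Nat.cast_sum, sum_Icc_choose_mul_add_choose_mul_choose_sub,
    gbinom_neg_natCast_sub_one, ← Nat.cast_add, gbinom_natCast, pow_add,
    show α + (j + β) = α + β + j by omega]
  push_cast
  linear_combination -(-1 : ℚ) ^ j * (α + β + j : ℕ).choose (j + β) * (α + β : ℕ).choose (j + β)
    * neg_one_pow_mul_self (R := ℚ) β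

theorem double_sum_identity_general (α β : ℕ) :
    ∑ j ∈ Finset.Icc 1 α, (1 / (j : ℚ)) *
        ∑ k ∈ Finset.Icc j α, (-1 : ℚ)^(k - j) * gbinom (α : ℚ) k
          * gbinom (-1 - (α : ℚ) - β) k * gbinom (β : ℚ) (k - j)
      = ∑ j ∈ Finset.Icc 1 α, ((-1 : ℚ)^β / (j : ℚ))
          * gbinom (-(α : ℚ) - 1) (j + β) * gbinom ((α : ℚ) + β) (j + β) := by
  refine sum_congr rfl fun j _ => ?_
  rw [sum_Icc_neg_one_pow_mul_gbinom]
  ring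

/-- For positive integers `α, β`,
`∑_{j=1}^{α} (1/j) ∑_{k=j}^{α} (-1)^{k-j} C(α,k) C(-1-α-β,k) C(β,k-j)
 = ∑_{j=1}^{α} ((-1)^β/j) C(-α-1,j+β) C(α+β,j+β)` in `ℚ`. -/
theorem double_sum_identity (α β : ℕ) (hα : 1 ≤ α) (hβ : 1 ≤ β) :
    ∑ j ∈ Finset.Icc 1 α, (1 / (j : ℚ)) *
        ∑ k ∈ Finset.Icc j α, (-1 : ℚ)^(k - j) * gbinom (α : ℚ) k
          * gbinom (-1 - (α : ℚ) - β) k * gbinom (β : ℚ) (k - j)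
      = ∑ j ∈ Finset.Icc 1 α, ((-1 : ℚ)^β / (j : ℚ))
          * gbinom (-(α : ℚ) - 1) (j + β) * gbinom ((α : ℚ) + β) (j + β) :=
  double_sum_identity_general α β
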